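/- Let μ, σ, μ', σ' be real numbers with μ > 0, μ' > 0, σ > 0 and σ' ≥ 0, set Δμ := μ − μ' and Δσ² := σ² − σ'², and assume the improvement condition Δσ² > 2·(σ²/μ)·Δμ − (σ²/μ²)·(Δμ)² holds. Then for every real number S > 0, the Cantelli misclassification bound strictly decreases after reduction: (σ'²/S)/(μ'² + σ'²/S) < (σ²/S)/(μ² + σ²/S). -/
import Mathlib

/-- **Corollary: the improvement condition tightens the Cantelli bound.**
With `μ > 0`, `μ' > 0`, `σ > 0`, `σ' ≥ 0`, `Δμ := μ - μ'`, `Δσ² := σ² - σ'²`: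
if `Δσ² > 2 (σ²/μ) Δμ - (σ²/μ²) (Δμ)²`, then for every `S > 0` the
post-reduction Cantelli misclassification bound is strictly smaller:
`(σ'²/S)/(μ'² + σ'²/S) < (σ²/S)/(μ² + σ²/S)`. -/
theorem improvement_condition_tightens_cantelli
    (μ σ μ' σ' : ℝ) (hμ : 0 < μ) (hμ' : 0 < μ') (hσ : 0 < σ) (hσ' : 0 ≤ σ')
    (h : σ ^ 2 - σ' ^ 2 >
          2 * (σ ^ 2 / μ) * (μ - μ') - (σ ^ 2 / μ ^ 2) * (μ - μ') ^ 2) :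
    ∀ S : ℝ, 0 < S →
      (σ' ^ 2 / S) / (μ' ^ 2 + σ' ^ 2 / S) <
        (σ ^ 2 / S) / (μ ^ 2 + σ ^ 2 / S) := by
  intro S hS
  have hμ2 : (0:ℝ) < μ ^ 2 := by positivity
  have key : σ' ^ 2 * μ ^ 2 < σ ^ 2 * μ' ^ 2 := by
    have h' := h
    have hne : μ ≠ 0 := hμ.ne'
    rw [gt_iff_lt, ← sub_lt_zero] at h'
    have h2 : (2 * (σ ^ 2 / μ) * (μ - μ') - σ ^ 2 / μ ^ 2 * (μ - μ') ^ 2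
        - (σ ^ 2 - σ' ^ 2)) * μ ^ 2 < 0 := mul_neg_of_neg_of_pos h' hμ2
    have hexp : (2 * (σ ^ 2 / μ) * (μ - μ') - σ ^ 2 / μ ^ 2 * (μ - μ') ^ 2
        - (σ ^ 2 - σ' ^ 2)) * μ ^ 2
        = σ' ^ 2 * μ ^ 2 - σ ^ 2 * μ' ^ 2 := by
      field_simp
      ring
    rw [hexp] at h2
    linarith
  have hd1 : (0:ℝ) < μ' ^ 2 + σ' ^ 2 / S := by positivity
  have hd2 : (0:ℝ) < μ ^ 2 + σ ^ 2 / S := by positivity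
  rw [div_lt_div_iff₀ hd1 hd2]
  have : σ' ^ 2 / S * μ ^ 2 < σ ^ 2 / S * μ' ^ 2 := by
    rw [div_mul_eq_mul_div, div_mul_eq_mul_div, div_lt_div_iff₀ hS hS]
    nlinarith
  nlinarith [sq_nonneg σ, sq_nonneg σ', mul_pos hS hS,
    div_nonneg (sq_nonneg σ') hS.le, div_nonneg (sq_nonneg σ) hS.le]
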